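/- Let M and N be finite simple matroids, each on a ground set of n elements, and suppose their Möbius polynomials are equal: μ_M(S,T) = μ_N(S,T). Then M and N have the same girth d*. -/

import Mathlib

open Matroid Polynomial Finset
open scoped Classical

namespace PaperMatroid

variable {α : Type*}

/-- The rank of a finset in a matroid on a finite type: the maximum size of an
independent subset. -/
noncomputable def mrk [Fintype α] (M : Matroid α) (x : Finset α) : ℕ :=
  (x.powerset.filter (fun (I : Finset α) => M.Indep (I : Set α))).sup Finset.card

/-- A circuit of a matroid: a minimal dependent set. -/
def IsCircuit (M : Matroid α) (C : Set α) : Prop :=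
  M.Dep C ∧ ∀ ⦃D⦄, D ⊂ C → M.Indep D

/-- The girth of a matroid: the minimum size of a circuit. -/
noncomputable def girth (M : Matroid α) : ℕ :=
  sInf {n | ∃ C, IsCircuit M C ∧ C.ncard = n}

/-- The cogirth of a matroid: the girth of the dual matroid, i.e. the minimum
size of a cocircuit. -/
noncomputable def cogirth (M : Matroid α) : ℕ := girth M✶

/-- The finset of (finsets corresponding to) flats of a matroid on a finite type. -/
noncomputable def flats [Fintype α] (M : Matroid α) : Finset (Finset α) :=
  Finset.univ.filter fun F => M.IsFlat ↑F

/-- The Möbius function of the lattice of flats of a matroid: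
`μ(X,X) = 1`, `μ(X,Y) = -Σ_{X ⊆ Z ⊊ Y, Z a flat} μ(X,Z)` for `X ⊊ Y`, and `0` otherwise. -/
noncomputable def mob [Fintype α] (M : Matroid α) (X Y : Finset α) : ℤ :=
  if X = Y then 1
  else if X ⊆ Y then
    -∑ Z ∈ ((flats M).filter fun Z => X ⊆ Z ∧ Z ⊂ Y).attach, mob M X Z.1
  else 0
termination_by Y.card
decreasing_by
  · have hZ := Z.2
    simp only [Finset.mem_filter] at hZ
    exact Finset.card_lt_card hZ.2.2

/-- The Möbius polynomial of a matroid, as a polynomial in `S` (the outer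
variable) whose coefficients are polynomials in `T` (the inner variable):
`μ_M(S,T) = Σ_{x ∈ L} Σ_{x ⊆ y ∈ L} μ(x,y) S^{r(x)} T^{k - r(y)}`,
where `L` is the lattice of flats and `k` is the rank of `M`. -/
noncomputable def mobiusPoly [Fintype α] (M : Matroid α) : Polynomial (Polynomial ℤ) :=
  ∑ x ∈ flats M, ∑ y ∈ (flats M).filter (fun y => x ⊆ y),
    mob M x y • (Polynomial.X ^ (mrk M x) *
      Polynomial.C (Polynomial.X ^ (mrk M Finset.univ - mrk M y)))

/-- The coboundary polynomial of a matroid, as a polynomial in `S` (the outer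
variable) whose coefficients are polynomials in `T` (the inner variable):
`χ_M(S,T) = Σ_{x ∈ L} Σ_{x ⊆ y ∈ L} μ(x,y) S^{|x|} T^{k - r(y)}`,
where `L` is the lattice of flats, `|x|` is the number of ground-set elements
of the flat `x`, and `k` is the rank of `M`. -/
noncomputable def cobPoly [Fintype α] (M : Matroid α) : Polynomial (Polynomial ℤ) :=
  ∑ x ∈ flats M, ∑ y ∈ (flats M).filter (fun y => x ⊆ y),
    mob M x y • (Polynomial.X ^ x.card *
      Polynomial.C (Polynomial.X ^ (mrk M Finset.univ - mrk M y)))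

/-!
The coefficient of `S^j T^(k-j)` in `μ_M` counts the flats of rank `j` (the Whitney number
`W_j`), and the `S`-degree of `μ_M` is the rank `k`; so `μ_M` determines every `W_j`.
In a matroid on `n` elements with girth `d ≥ 2`, every set of at most `d - 2` elements is an
independent flat, so `W_j = C(n, j)` for `j ≤ d - 2` (for a simple matroid, `W_1 = n`).
On the other hand `W_(d-1) < C(n, d-1)`: every flat of rank `d - 1` is spanned by a
`(d-1)`-set, and two different `(d-1)`-subsets of a smallest circuit span the same flat.
Hence `d - 1` is the least `j` with `W_j < C(n, j)`.
-/

section Girth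

variable {M : Matroid α} {X : Set α}

lemma isCircuit_iff {C : Set α} : IsCircuit M C ↔ M.IsCircuit C :=
  isCircuit_iff_forall_ssubset.symm

lemma girth_le_ncard {C : Set α} (hC : M.IsCircuit C) : girth M ≤ C.ncard :=
  Nat.sInf_le ⟨C, isCircuit_iff.2 hC, rfl⟩

lemma exists_isCircuit_ncard_eq_girth (h : girth M ≠ 0) :
    ∃ C, M.IsCircuit C ∧ C.ncard = girth M := by
  obtain ⟨C, hC, hCg⟩ := Nat.sInf_mem (Nat.nonempty_of_pos_sInf (Nat.pos_of_ne_zero h))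
  exact ⟨C, isCircuit_iff.1 hC, hCg⟩

lemma indep_of_ncard_lt_girth (hX : X.Finite) (hXE : X ⊆ M.E) (h : X.ncard < girth M) :
    M.Indep X := by
  by_contra hdep
  obtain ⟨C, hCX, hC⟩ := ((not_indep_iff hXE).1 hdep).exists_isCircuit_subset
  exact (girth_le_ncard hC).not_gt ((Set.ncard_le_ncard hCX hX).trans_lt h)

end Girth

section Rank

variable [Fintype α] {M : Matroid α} {x y : Finset α}

lemma coe_mrk (M : Matroid α) (x : Finset α) : (mrk M x : ℕ∞) = M.eRk x := by
  apply le_antisymm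
  · obtain ⟨I, hI, hIx⟩ := Finset.exists_mem_eq_sup
      (x.powerset.filter fun I : Finset α => M.Indep ↑I) ⟨∅, by simp⟩ Finset.card
    rw [Finset.mem_filter, Finset.mem_powerset] at hI
    rw [mrk, hIx, ← Set.encard_coe_eq_coe_finsetCard]
    exact hI.2.encard_le_eRk_of_subset (Finset.coe_subset.2 hI.1)
  · obtain ⟨I, hI⟩ := M.exists_isBasis' x
    obtain ⟨I, rfl⟩ := (x.finite_toSet.subset hI.subset).exists_finset_coe
    rw [← hI.encard_eq_eRk, Set.encard_coe_eq_coe_finsetCard, Nat.cast_le]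
    exact Finset.le_sup (by simp [Finset.mem_filter, hI.indep, Finset.coe_subset.1 hI.subset])

lemma mrk_eq_card_of_indep (h : M.Indep ↑x) : mrk M x = x.card := by
  rw [← Nat.cast_inj (R := ℕ∞), coe_mrk, h.eRk_eq_encard, Set.encard_coe_eq_coe_finsetCard]

lemma mrk_le_card (M : Matroid α) (x : Finset α) : mrk M x ≤ x.card := by
  rw [← Nat.cast_le (α := ℕ∞), coe_mrk, ← Set.encard_coe_eq_coe_finsetCard]
  exact M.eRk_le_encard x

lemma mrk_mono (M : Matroid α) (h : x ⊆ y) : mrk M x ≤ mrk M y := by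
  rw [← Nat.cast_le (α := ℕ∞), coe_mrk, coe_mrk]
  exact M.eRk_mono (Finset.coe_subset.2 h)

lemma eq_of_isFlat_of_subset_of_mrk_le (hx : M.IsFlat ↑x) (hy : M.IsFlat ↑y) (hxy : x ⊆ y)
    (h : mrk M y ≤ mrk M x) : x = y := by
  rw [← Nat.cast_le (α := ℕ∞), coe_mrk, coe_mrk] at h
  have := (M.isRkFinite_of_finite x.finite_toSet).closure_eq_closure_of_subset_of_eRk_ge_eRk
    (Finset.coe_subset.2 hxy) h
  rwa [hx.closure, hy.closure, Finset.coe_inj] at this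

end Rank

section FlatsOfRank

variable [Fintype α] {M : Matroid α} {j : ℕ} {F : Finset α}

/-- The flats of rank `j`; their number is the Whitney number of the second kind `W_j`. -/
noncomputable def flatsOfRank (M : Matroid α) (j : ℕ) : Finset (Finset α) :=
  (flats M).filter fun F => mrk M F = j

lemma mem_flatsOfRank : F ∈ flatsOfRank M j ↔ M.IsFlat ↑F ∧ mrk M F = j := by
  simp [flatsOfRank, flats]

lemma flatsOfRank_eq_empty (h : mrk M univ < j) : flatsOfRank M j = ∅ :=
  Finset.eq_empty_of_forall_notMem fun F hF =>
    (mrk_mono M (subset_univ F)).not_gt ((mem_flatsOfRank.1 hF).2 ▸ h)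

lemma isFlat_of_card_add_one_lt_girth (hE : M.E = Set.univ) (h : F.card + 1 < girth M) :
    M.IsFlat ↑F := by
  have hF : M.Indep ↑F := indep_of_ncard_lt_girth F.finite_toSet (by simp [hE])
    (by rw [Set.ncard_coe_finset]; omega)
  refine isFlat_iff_closure_eq.2 ((M.subset_closure ↑F (by simp [hE])).antisymm' fun e he => ?_)
  by_contra heF
  refine ((hF.insert_dep_iff).2 ⟨he, heF⟩).not_indep (indep_of_ncard_lt_girth
    (F.finite_toSet.insert e) (by simp [hE]) ?_)
  rw [Set.ncard_insert_of_notMem heF, Set.ncard_coe_finset]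
  exact h

lemma flatsOfRank_eq_powersetCard (hE : M.E = Set.univ) (hj : j + 2 ≤ girth M) :
    flatsOfRank M j = powersetCard j univ := by
  have indep_of_card_le : ∀ S : Finset α, S.card ≤ j + 1 → M.Indep ↑S := fun S hS =>
    indep_of_ncard_lt_girth S.finite_toSet (by simp [hE]) (by rw [Set.ncard_coe_finset]; omega)
  ext F
  rw [mem_flatsOfRank, mem_powersetCard_univ]
  constructor
  · rintro ⟨-, rfl⟩
    by_contra hne
    obtain ⟨S, hSF, hS⟩ := Finset.exists_subset_card_eq
      (show mrk M F + 1 ≤ F.card by have := mrk_le_card M F; omega)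
    have := mrk_mono M hSF
    rw [mrk_eq_card_of_indep (indep_of_card_le S (by omega)), hS] at this
    omega
  · intro hF
    exact ⟨isFlat_of_card_add_one_lt_girth hE (by omega), by
      rw [mrk_eq_card_of_indep (indep_of_card_le F (by omega)), hF]⟩

lemma flatsOfRank_subset_image_closure (hE : M.E = Set.univ) :
    flatsOfRank M j ⊆
      (powersetCard j univ).image fun S : Finset α => (M.closure ↑S).toFinset := by
  intro F hF
  obtain ⟨hflat, hrk⟩ := mem_flatsOfRank.1 hF
  obtain ⟨I, hI⟩ := M.exists_isBasis ↑F (by simp [hE])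
  obtain ⟨I, rfl⟩ := (F.finite_toSet.subset hI.subset).exists_finset_coe
  refine Finset.mem_image.2 ⟨I, mem_powersetCard_univ.2 ?_, ?_⟩
  · rw [← Nat.cast_inj (R := ℕ∞), ← Set.encard_coe_eq_coe_finsetCard, hI.encard_eq_eRk,
      ← coe_mrk, hrk]
  · rw [hI.closure_eq_closure, hflat.closure, Finset.toFinset_coe]

lemma card_flatsOfRank_girth_sub_one_lt (hE : M.E = Set.univ) (h : 2 ≤ girth M) :
    #(flatsOfRank M (girth M - 1)) < (Fintype.card α).choose (girth M - 1) := by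
  obtain ⟨C, hC, hCg⟩ := exists_isCircuit_ncard_eq_girth (M := M) (by omega)
  obtain ⟨C, rfl⟩ := C.toFinite.exists_finset_coe
  rw [Set.ncard_coe_finset] at hCg
  obtain ⟨e₁, he₁, e₂, he₂, hne⟩ := Finset.one_lt_card.1 (show 1 < C.card by omega)
  have hmem : ∀ e ∈ C, C.erase e ∈ powersetCard (girth M - 1) univ := fun e he =>
    mem_powersetCard_univ.2 (by rw [card_erase_of_mem he, hCg])
  have hspan : (M.closure ↑(C.erase e₁)).toFinset = (M.closure ↑(C.erase e₂)).toFinset := by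
    simp only [coe_erase, hC.closure_sdiff_singleton_eq]
  have hdiff : C.erase e₁ ≠ C.erase e₂ := fun h =>
    (Finset.mem_erase.1 (h ▸ Finset.mem_erase.2 ⟨hne.symm, he₂⟩)).1 rfl
  calc #(flatsOfRank M (girth M - 1))
      ≤ #((powersetCard (girth M - 1) univ).image
          fun S : Finset α => (M.closure ↑S).toFinset) :=
        card_le_card (flatsOfRank_subset_image_closure hE)
    _ < #(powersetCard (girth M - 1) (univ : Finset α)) :=
        card_image_le.lt_of_ne fun h =>
          hdiff (card_image_iff.1 h (hmem e₁ he₁) (hmem e₂ he₂) hspan)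
    _ = (Fintype.card α).choose (girth M - 1) := by rw [card_powersetCard, card_univ]

lemma girth_sub_one_eq_sInf (hE : M.E = Set.univ) (h : 2 ≤ girth M) :
    girth M - 1 = sInf {j | #(flatsOfRank M j) < (Fintype.card α).choose j} := by
  refine (IsLeast.csInf_eq (s := {j | #(flatsOfRank M j) < (Fintype.card α).choose j})
    ⟨card_flatsOfRank_girth_sub_one_lt hE h, fun j hj => ?_⟩).symm
  by_contra! hlt
  rw [Set.mem_ofPred_eq, flatsOfRank_eq_powersetCard hE (by omega), card_powersetCard,
    card_univ] at hj
  exact hj.false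

end FlatsOfRank

section MobiusPoly

variable [Fintype α] {M : Matroid α} {i j : ℕ}

lemma mob_self (M : Matroid α) (x : Finset α) : mob M x x = 1 := by
  rw [mob, if_pos rfl]

lemma coeff_coeff_smul_X_pow_mul_C_X_pow (z : ℤ) (u v i m : ℕ) :
    ((z • ((X : (ℤ[X])[X]) ^ u * C (X ^ v))).coeff i).coeff m =
      if u = i ∧ v = m then z else 0 := by
  rw [mul_comm, C_mul_X_pow_eq_monomial, smul_monomial, coeff_monomial]
  split_ifs with hu hm hm
  all_goals simp_all [coeff_X_pow, eq_comm]

lemma coeff_coeff_mobiusPoly (M : Matroid α) (i m : ℕ) :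
    ((mobiusPoly M).coeff i).coeff m = ∑ x ∈ flats M, ∑ y ∈ (flats M).filter (x ⊆ ·),
      if mrk M x = i ∧ mrk M univ - mrk M y = m then mob M x y else 0 := by
  simp only [mobiusPoly, finsetSum_coeff, coeff_coeff_smul_X_pow_mul_C_X_pow]

lemma coeff_mobiusPoly_eq_zero (h : mrk M univ < i) : (mobiusPoly M).coeff i = 0 := by
  ext m
  rw [coeff_coeff_mobiusPoly, coeff_zero]
  refine sum_eq_zero fun x _ => sum_eq_zero fun y _ => if_neg fun hrk => ?_
  have := mrk_mono M (subset_univ x)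
  omega

/-- Only the pairs `x = y` contribute: a flat contains no other flat of the same rank. -/
lemma coeff_coeff_mobiusPoly_rank_sub (hj : j ≤ mrk M univ) :
    ((mobiusPoly M).coeff j).coeff (mrk M univ - j) = #(flatsOfRank M j) := by
  rw [coeff_coeff_mobiusPoly, flatsOfRank, card_filter, Nat.cast_sum]
  refine sum_congr rfl fun x hx => ?_
  split_ifs with hxj
  · refine (sum_eq_single_of_mem x (mem_filter.2 ⟨hx, subset_rfl⟩) fun y hy hyx => ?_).trans
      (by rw [if_pos ⟨hxj, by rw [hxj]⟩, mob_self, Nat.cast_one])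
    obtain ⟨hy, hxy⟩ := mem_filter.1 hy
    refine if_neg fun hrk => hyx (eq_of_isFlat_of_subset_of_mrk_le (mem_filter.1 hx).2
      (mem_filter.1 hy).2 hxy ?_).symm
    have := mrk_mono M (subset_univ y)
    omega
  · exact (sum_eq_zero fun y _ => if_neg fun h => hxj h.1).trans Nat.cast_zero.symm

lemma natDegree_mobiusPoly (hE : M.E = Set.univ) : (mobiusPoly M).natDegree = mrk M univ := by
  refine le_antisymm (natDegree_le_iff_coeff_eq_zero.2 fun i hi => coeff_mobiusPoly_eq_zero
    (by exact_mod_cast hi)) (le_natDegree_of_ne_zero fun h0 => ?_)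
  have := coeff_coeff_mobiusPoly_rank_sub (M := M) le_rfl
  rw [h0, coeff_zero, eq_comm, Nat.cast_eq_zero, card_eq_zero] at this
  refine ne_empty_of_mem (mem_flatsOfRank.2 ⟨?_, rfl⟩) this
  simpa [hE] using M.ground_isFlat

end MobiusPoly

lemma card_flatsOfRank_eq_of_mobiusPoly_eq {β : Type*} [Fintype α] [Fintype β]
    {M : Matroid α} {N : Matroid β} (hME : M.E = Set.univ) (hNE : N.E = Set.univ)
    (h : mobiusPoly M = mobiusPoly N) (j : ℕ) : #(flatsOfRank M j) = #(flatsOfRank N j) := by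
  have hk : mrk M univ = mrk N univ := by
    rw [← natDegree_mobiusPoly hME, h, natDegree_mobiusPoly hNE]
  rcases le_or_gt j (mrk M univ) with hj | hj
  · have := coeff_coeff_mobiusPoly_rank_sub (M := M) hj
    rw [h, hk, coeff_coeff_mobiusPoly_rank_sub (hk ▸ hj)] at this
    exact_mod_cast this.symm
  · rw [flatsOfRank_eq_empty hj, flatsOfRank_eq_empty (hk ▸ hj), card_empty, card_empty]

theorem girth_eq_of_mobiusPoly_eq_general {α β : Type*} [Fintype α] [Fintype β]
    (M : Matroid α) (N : Matroid β)
    (hME : M.E = Set.univ) (hNE : N.E = Set.univ)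
    (hMsimple : 2 < girth M) (hNsimple : 2 < girth N)
    (h : mobiusPoly M = mobiusPoly N) :
    girth M = girth N := by
  have hW := card_flatsOfRank_eq_of_mobiusPoly_eq hME hNE h
  have hcard : Fintype.card α = Fintype.card β := by
    simpa [flatsOfRank_eq_powersetCard hME (j := 1) (by omega),
      flatsOfRank_eq_powersetCard hNE (j := 1) (by omega)] using hW 1
  have hM := girth_sub_one_eq_sInf hME hMsimple.le
  have hN := girth_sub_one_eq_sInf hNE hNsimple.le
  simp only [hW, hcard] at hM
  omega

/-- If two finite simple matroids on `n` elements have equal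
Möbius polynomials, then they have the same girth. -/
theorem girth_eq_of_mobiusPoly_eq {α β : Type*} [Fintype α] [Fintype β]
    (M : Matroid α) (N : Matroid β)
    (hME : M.E = Set.univ) (hNE : N.E = Set.univ)
    (n : ℕ) (hnM : n = Fintype.card α) (hnN : n = Fintype.card β)
    (hMsimple : 2 < girth M) (hNsimple : 2 < girth N)
    (h : mobiusPoly M = mobiusPoly N) :
    girth M = girth N :=
  girth_eq_of_mobiusPoly_eq_general M N hME hNE hMsimple hNsimple h

end PaperMatroid
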